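/- arXiv:1504.02551 — 2 statements merged into one kernel-verified Lean document; each statement's English description precedes it below -/
import Mathlib

section
/- Let k > 0 be a real number and define ψ(x,y) = ln( (k/2) · (coth²(√k · x) − 1/3) ) for x ≠ 0, y ∈ ℝ. Then ψ is a solution of the Tzitzéica equation with affine mean curvature H = −1 and cubic-form modulus |U|² = k³/27; explicitly, for all x ≠ 0 and all y, (1/4)(∂²ψ/∂x² + ∂²ψ/∂y²) − e^{ψ(x,y)} + (k³/27) · e^{−2ψ(x,y)} = 0. -/
/-- Real hyperbolic cotangent. -/
noncomputable def coth (x : ℝ) : ℝ := Real.cosh x / Real.sinh x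

/-- `ψ(x,y) = ln( (k/2)(coth²(√k x) − 1/3) )`. -/
noncomputable def ψ (k x y : ℝ) : ℝ :=
  Real.log (k / 2 * ((coth (Real.sqrt k * x)) ^ 2 - 1 / 3))

/-! Write `k = a²` with `a > 0` and `c = coth (a x)`. Then `c` solves the Riccati equation
`c' = a (1 - c²)`, so `ψ_x` and `ψ_xx` are rational functions of `c`, `ψ` does not depend
on `y`, and `e^ψ = k (c² - 1/3) / 2`; the Tzitzéica equation becomes a rational identity
in `u = c²`. -/

open Filter Topology

lemma one_lt_coth_sq {t : ℝ} (ht : t ≠ 0) : 1 < coth t ^ 2 := by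
  have hs : 0 < Real.sinh t ^ 2 := by positivity [Real.sinh_ne_zero.2 ht]
  rw [coth, div_pow, one_lt_div hs]
  nlinarith [Real.cosh_sq t]

lemma hasDerivAt_coth {t : ℝ} (ht : t ≠ 0) : HasDerivAt coth (1 - coth t ^ 2) t := by
  have hs : Real.sinh t ≠ 0 := Real.sinh_ne_zero.2 ht
  refine ((Real.hasDerivAt_cosh t).div (Real.hasDerivAt_sinh t) hs).congr_deriv ?_
  rw [coth, div_pow]
  field_simp

lemma hasDerivAt_coth_const_mul {a s : ℝ} (ha : a ≠ 0) (hs : s ≠ 0) :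
    HasDerivAt (fun u => coth (a * u)) (a * (1 - coth (a * s) ^ 2)) s := by
  simpa [mul_comm, Function.comp_def] using
    (hasDerivAt_coth (mul_ne_zero ha hs)).comp s ((hasDerivAt_id s).const_mul a)

/-- With `c = coth (a x)`, so that `c' = a (1 - c²)`, one has `∂ψ/∂x = a · psiSlope c`. -/
noncomputable def psiSlope (c : ℝ) : ℝ := 2 * c * (1 - c ^ 2) / (c ^ 2 - 1 / 3)

lemma hasDerivAt_psiSlope {c : ℝ} (hc : c ^ 2 - 1 / 3 ≠ 0) :
    HasDerivAt psiSlope (-(2 * (c ^ 2) ^ 2 + 2 / 3) / (c ^ 2 - 1 / 3) ^ 2) c := by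
  have hnum : HasDerivAt (fun c : ℝ => 2 * c * (1 - c ^ 2))
      (2 * (1 - c ^ 2) + 2 * c * (-(2 * c))) c :=
    (((hasDerivAt_id c).const_mul 2).mul
      ((hasDerivAt_const c 1).sub (hasDerivAt_pow 2 c))).congr_deriv (by simp)
  have hden : HasDerivAt (fun c : ℝ => c ^ 2 - 1 / 3) (2 * c) c := by
    simpa using (hasDerivAt_pow 2 c).sub_const (1 / 3 : ℝ)
  refine (hnum.div hden hc).congr_deriv ?_
  ring

lemma ψ_sq {a : ℝ} (ha : 0 ≤ a) (x y : ℝ) :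
    ψ (a ^ 2) x y = Real.log (a ^ 2 / 2 * (coth (a * x) ^ 2 - 1 / 3)) := by
  rw [ψ, Real.sqrt_sq ha]

lemma exp_ψ_sq {a x : ℝ} (ha : 0 < a) (hx : x ≠ 0) (y : ℝ) :
    Real.exp (ψ (a ^ 2) x y) = a ^ 2 / 2 * (coth (a * x) ^ 2 - 1 / 3) := by
  have hc := one_lt_coth_sq (mul_ne_zero ha.ne' hx)
  rw [ψ_sq ha.le, Real.exp_log (by positivity [show 0 < coth (a * x) ^ 2 - 1 / 3 by linarith])]

lemma hasDerivAt_ψ_sq {a s : ℝ} (ha : 0 < a) (hs : s ≠ 0) (y : ℝ) :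
    HasDerivAt (fun u => ψ (a ^ 2) u y) (a * psiSlope (coth (a * s))) s := by
  have hc := one_lt_coth_sq (mul_ne_zero ha.ne' hs)
  have hpos : 0 < a ^ 2 / 2 * (coth (a * s) ^ 2 - 1 / 3) := by
    positivity [show 0 < coth (a * s) ^ 2 - 1 / 3 by linarith]
  simp_rw [ψ_sq ha.le]
  refine ((((hasDerivAt_coth_const_mul ha.ne' hs).pow 2).sub_const (1 / 3)).const_mul
    (a ^ 2 / 2) |>.log hpos.ne').congr_deriv ?_
  rw [psiSlope, Pi.pow_apply]
  field_simp
  ring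

lemma deriv_deriv_ψ_sq {a x : ℝ} (ha : 0 < a) (hx : x ≠ 0) (y : ℝ) :
    deriv (deriv fun u => ψ (a ^ 2) u y) x =
      a ^ 2 * (1 - coth (a * x) ^ 2) *
        (-(2 * (coth (a * x) ^ 2) ^ 2 + 2 / 3) / (coth (a * x) ^ 2 - 1 / 3) ^ 2) := by
  have hderiv :
      (deriv fun u => ψ (a ^ 2) u y) =ᶠ[𝓝 x] fun s => a * psiSlope (coth (a * s)) := by
    filter_upwards [eventually_ne_nhds hx] with s hs
    exact (hasDerivAt_ψ_sq ha hs y).deriv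
  have hc := one_lt_coth_sq (mul_ne_zero ha.ne' hx)
  have hslope := ((hasDerivAt_psiSlope (c := coth (a * x)) (by linarith)).comp x
    (hasDerivAt_coth_const_mul ha.ne' hx)).const_mul a
  rw [hderiv.deriv_eq]
  refine hslope.deriv.trans ?_
  ring

lemma deriv_deriv_ψ_snd (k x y : ℝ) : deriv (deriv fun s => ψ k x s) y = 0 := by
  simp only [ψ, deriv_const', deriv_const]

lemma Real.exp_neg_two_mul (t : ℝ) : Real.exp (-2 * t) = (Real.exp t ^ 2)⁻¹ := by
  rw [← Real.exp_nat_mul, ← Real.exp_neg]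
  push_cast
  ring_nf

lemma tzitzeica_rational_identity (a u : ℝ) (hu : u - 1 / 3 ≠ 0) :
    1 / 4 * (a ^ 2 * (1 - u) * (-(2 * u ^ 2 + 2 / 3) / (u - 1 / 3) ^ 2))
      - a ^ 2 / 2 * (u - 1 / 3) + (a ^ 2) ^ 3 / 27 * ((a ^ 2 / 2 * (u - 1 / 3)) ^ 2)⁻¹ = 0 := by
  obtain ⟨D, rfl⟩ : ∃ D, u = D + 1 / 3 := ⟨u - 1 / 3, by ring⟩
  rw [add_sub_cancel_right] at hu ⊢
  rw [mul_pow, div_pow, mul_inv, inv_div]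
  field_simp
  ring

/-- `ψ` solves the Tzitzéica equation with `H = −1` and `|U|² = k³/27`. -/
theorem tzitzeica_semihomogeneous (k : ℝ) (hk : 0 < k) :
    ∀ x : ℝ, x ≠ 0 → ∀ y : ℝ,
      (1 / 4) * (deriv (deriv fun s => ψ k s y) x + deriv (deriv fun s => ψ k x s) y)
          - Real.exp (ψ k x y) + (k ^ 3 / 27) * Real.exp (-2 * ψ k x y) = 0 := by
  obtain ⟨a, ha, rfl⟩ : ∃ a : ℝ, 0 < a ∧ a ^ 2 = k :=
    ⟨Real.sqrt k, Real.sqrt_pos.2 hk, Real.sq_sqrt hk.le⟩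
  intro x hx y
  have hc : coth (a * x) ^ 2 - 1 / 3 ≠ 0 := by
    linarith [one_lt_coth_sq (mul_ne_zero ha.ne' hx)]
  rw [deriv_deriv_ψ_sq ha hx, deriv_deriv_ψ_snd, add_zero, Real.exp_neg_two_mul,
    exp_ψ_sq ha hx]
  exact tzitzeica_rational_identity a _ hc
end

section
/- Let p ∈ [2,∞) and q ∈ (1,2] with 1/p + 1/q = 1, and define for ξ > 0 the function t(ξ) = (√(ξ+p+q−1) + √(p+q)) · ( ξ/(√(ξ+p+q−1) + √(p+q−1))² )^{√(p+q−1)/√(p+q)} · ( (√(ξ+p+q−1) + √(q−1))/(ξ+p) )^{1/p} · ( (√(ξ+p+q−1) + √(p−1))/(ξ+q) )^{1/q}. Then t is differentiable and positive on (0,∞), and for all ξ > 0, t'(ξ)/t(ξ) = (3ξ + 2(p+q−1)) / ( 2ξ·√(ξ+p+q−1)·(√(p+q) + ξ·√(ξ+p+q−1)) ). -/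
/-!
Write `s = √(ξ+p+q-1)`, `P = √(p-1)`, `Q = √(q-1)`. Conjugacy of `p` and `q` gives `PQ = 1` and
`√(p+q) = P + Q`. Since `ξ + p = s² - Q²` and `ξ + q = s² - P²`, every factor of `t` has a simple
logarithmic derivative, and their sum collapses thanks to the factorizations
`(P²+1)(s-Q) = (P+Q)(Ps-1)`, `(Ps-1)(Qs-1) = s² - (P+Q)s + 1` and
`√(p+q) + ξs = (s + √(p+q))(s² - (P+Q)s + 1)`.
-/

/-- The function `t(ξ)` of Theorem 3.4 of the paper (case `c = −2(p+q)`, `s = 1`). -/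
noncomputable def tfun (p q ξ : ℝ) : ℝ :=
  (Real.sqrt (ξ + p + q - 1) + Real.sqrt (p + q)) *
    (ξ / (Real.sqrt (ξ + p + q - 1) + Real.sqrt (p + q - 1)) ^ 2) ^
      (Real.sqrt (p + q - 1) / Real.sqrt (p + q)) *
    ((Real.sqrt (ξ + p + q - 1) + Real.sqrt (q - 1)) / (ξ + p)) ^ (1 / p) *
    ((Real.sqrt (ξ + p + q - 1) + Real.sqrt (p - 1)) / (ξ + q)) ^ (1 / q)

open Real

/- Unlike Mathlib's `logDeriv`, which is junk where `f` is not differentiable, this records the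
derivative itself, so it is stable under products, quotients and powers. -/
def HasLogDerivAt (f : ℝ → ℝ) (L x : ℝ) : Prop :=
  HasDerivAt f (f x * L) x

theorem HasDerivAt.hasLogDerivAt {f : ℝ → ℝ} {f' x : ℝ} (h : HasDerivAt f f' x) (hf : f x ≠ 0) :
    HasLogDerivAt f (f' / f x) x := by
  rwa [HasLogDerivAt, mul_div_cancel₀ _ hf]

namespace HasLogDerivAt

variable {f g : ℝ → ℝ} {L M x : ℝ}

theorem differentiableAt (h : HasLogDerivAt f L x) : DifferentiableAt ℝ f x :=
  HasDerivAt.differentiableAt h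

theorem logDeriv_eq (h : HasLogDerivAt f L x) (hf : f x ≠ 0) : logDeriv f x = L := by
  rw [logDeriv_apply, HasDerivAt.deriv h, mul_div_cancel_left₀ _ hf]

theorem mul (hf : HasLogDerivAt f L x) (hg : HasLogDerivAt g M x) :
    HasLogDerivAt (fun y => f y * g y) (L + M) x := by
  show HasDerivAt _ (f x * g x * (L + M)) x
  exact (HasDerivAt.fun_mul hf hg).congr_deriv (by ring)

theorem div (hf : HasLogDerivAt f L x) (hg : HasLogDerivAt g M x) (hgx : g x ≠ 0) :
    HasLogDerivAt (fun y => f y / g y) (L - M) x := by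
  show HasDerivAt _ (f x / g x * (L - M)) x
  exact (HasDerivAt.fun_div hf hg hgx).congr_deriv (by field_simp)

theorem pow (hf : HasLogDerivAt f L x) (n : ℕ) : HasLogDerivAt (fun y => f y ^ n) (n * L) x := by
  show HasDerivAt _ (f x ^ n * (n * L)) x
  refine (HasDerivAt.fun_pow hf n).congr_deriv ?_
  rcases n with _ | n
  · simp
  · push_cast
    ring

theorem rpow_const (hf : HasLogDerivAt f L x) (hfx : f x ≠ 0) (r : ℝ) :
    HasLogDerivAt (fun y => f y ^ r) (r * L) x := by
  show HasDerivAt _ (f x ^ r * (r * L)) x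
  convert HasDerivAt.rpow_const hf (.inl hfx) using 1
  rw [rpow_sub_one hfx]
  field_simp

end HasLogDerivAt

theorem hasLogDerivAt_id {x : ℝ} (hx : x ≠ 0) : HasLogDerivAt (fun y => y) (1 / x) x :=
  (hasDerivAt_id' x).hasLogDerivAt hx

theorem hasLogDerivAt_add_const {a x : ℝ} (hx : x + a ≠ 0) :
    HasLogDerivAt (fun y => y + a) (1 / (x + a)) x :=
  ((hasDerivAt_id' x).add_const a).hasLogDerivAt hx

section SqrtAddConst

variable {a b c x : ℝ}

theorem hasDerivAt_sqrt_add_const (hx : 0 < x + c) :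
    HasDerivAt (fun y => √(y + c)) (1 / (2 * √(x + c))) x :=
  ((hasDerivAt_id' x).add_const c).sqrt hx.ne'

theorem hasLogDerivAt_sqrt_add_const_add (hx : 0 < x + c) (ha : √(x + c) + a ≠ 0) :
    HasLogDerivAt (fun y => √(y + c) + a) (1 / (2 * √(x + c) * (√(x + c) + a))) x := by
  simpa only [div_div] using ((hasDerivAt_sqrt_add_const hx).add_const a).hasLogDerivAt ha

theorem hasLogDerivAt_div_sq_sqrt_add_sqrt (hc : 0 < c) (hx : 0 < x) :
    HasLogDerivAt (fun y => y / (√(y + c) + √c) ^ 2) (√c / (x * √(x + c))) x := by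
  have hs : 0 < √(x + c) := sqrt_pos.2 (by linarith)
  have hsc : 0 < √(x + c) + √c := by positivity
  convert (hasLogDerivAt_id hx.ne').div ((hasLogDerivAt_sqrt_add_const_add (by linarith)
    hsc.ne').pow 2) (by positivity) using 1
  have hs2 : √(x + c) ^ 2 = x + √c ^ 2 := by
    rw [sq_sqrt (by linarith), sq_sqrt hc.le]
  field_simp
  linear_combination (-2) * hs2

theorem hasLogDerivAt_sqrt_add_const_add_div (hc : c = a + b ^ 2) (hx : 0 < x + a) :
    HasLogDerivAt (fun y => (√(y + c) + b) / (y + a))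
      (-1 / (2 * √(x + c) * (√(x + c) - b))) x := by
  have hs2 : √(x + c) ^ 2 = x + a + b ^ 2 := by
    rw [sq_sqrt (by nlinarith), hc, add_assoc]
  have hbs : |b| < √(x + c) := by
    rw [lt_sqrt (abs_nonneg b), sq_abs]; nlinarith
  obtain ⟨hbs₁, hbs₂⟩ := abs_lt.1 hbs
  have hs : 0 < √(x + c) := by linarith
  convert (hasLogDerivAt_sqrt_add_const_add (c := c) (a := b) (by nlinarith) (by linarith)).div
    (hasLogDerivAt_add_const hx.ne') hx.ne' using 1
  have : √(x + c) - b ≠ 0 := by linarith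
  have : √(x + c) + b ≠ 0 := by linarith
  field_simp
  linear_combination 2 * √(x + c) * hs2

end SqrtAddConst

theorem tfun_pos {p q ξ : ℝ} (hp : 1 ≤ p) (hq : 1 ≤ q) (hξ : 0 < ξ) : 0 < tfun p q ξ := by
  have : 0 < √(ξ + p + q - 1) := sqrt_pos.2 (by linarith)
  unfold tfun
  positivity

theorem hasLogDerivAt_tfun {p q ξ : ℝ} (hp : 1 ≤ p) (hq : 1 ≤ q) (hξ : 0 < ξ) :
    HasLogDerivAt (tfun p q)
      (1 / (2 * √(ξ + p + q - 1) * (√(ξ + p + q - 1) + √(p + q))) +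
        √(p + q - 1) / √(p + q) * (√(p + q - 1) / (ξ * √(ξ + p + q - 1))) +
        1 / p * (-1 / (2 * √(ξ + p + q - 1) * (√(ξ + p + q - 1) - √(q - 1)))) +
        1 / q * (-1 / (2 * √(ξ + p + q - 1) * (√(ξ + p + q - 1) - √(p - 1))))) ξ := by
  have hc : ∀ y : ℝ, y + p + q - 1 = y + (p + q - 1) := fun y => by ring
  have hs : 0 < √(ξ + (p + q - 1)) := sqrt_pos.2 (by linarith)
  have hbase : ∀ {a b : ℝ}, 0 < ξ + a → 0 ≤ b → (√(ξ + (p + q - 1)) + b) / (ξ + a) ≠ 0 :=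
    fun ha hb => (div_pos (add_pos_of_pos_of_nonneg hs hb) ha).ne'
  have h₁ := hasLogDerivAt_sqrt_add_const_add (c := p + q - 1) (x := ξ) (a := √(p + q)) (by linarith)
    (add_pos_of_pos_of_nonneg hs (sqrt_nonneg _)).ne'
  have h₂ := (hasLogDerivAt_div_sq_sqrt_add_sqrt (c := p + q - 1) (by linarith) hξ).rpow_const
    (by positivity) (√(p + q - 1) / √(p + q))
  have h₃ := (hasLogDerivAt_sqrt_add_const_add_div (c := p + q - 1) (a := p) (b := √(q - 1))
    (by rw [sq_sqrt (by linarith)]; ring) (by linarith)).rpow_const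
    (hbase (by linarith) (sqrt_nonneg _)) (1 / p)
  have h₄ := (hasLogDerivAt_sqrt_add_const_add_div (c := p + q - 1) (a := q) (b := √(p - 1))
    (by rw [sq_sqrt (by linarith)]; ring) (by linarith)).rpow_const
    (hbase (by linarith) (sqrt_nonneg _)) (1 / q)
  unfold tfun
  simp only [hc]
  exact ((h₁.mul h₂).mul h₃).mul h₄

namespace Real.HolderConjugate

variable {p q : ℝ}

theorem sqrt_sub_one_mul_sqrt_sub_one (h : p.HolderConjugate q) : √(p - 1) * √(q - 1) = 1 := by
  rw [← sqrt_mul h.sub_one_pos.le, show (p - 1) * (q - 1) = 1 by linear_combination h.mul_eq_add,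
    sqrt_one]

theorem sqrt_add (h : p.HolderConjugate q) : √(p + q) = √(p - 1) + √(q - 1) := by
  rw [← sqrt_sq (by positivity : 0 ≤ √(p - 1) + √(q - 1)), add_sq, sq_sqrt h.sub_one_pos.le,
    sq_sqrt h.symm.sub_one_pos.le, mul_assoc, h.sqrt_sub_one_mul_sqrt_sub_one]
  ring_nf

end Real.HolderConjugate

theorem conjugate_terms_eq {A P Q s : ℝ} (hP : 0 < P) (hQ : 0 < Q) (hPQ : P * Q = 1)
    (hA : A = P + Q) (hs : 0 < s) (hPs : 1 < P * s) (hQs : 1 < Q * s) :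
    1 / (P ^ 2 + 1) * (-1 / (2 * s * (s - Q))) + 1 / (Q ^ 2 + 1) * (-1 / (2 * s * (s - P))) =
      -(A * s - 2) / (2 * s * A * ((P * s - 1) * (Q * s - 1))) := by
  have hA0 : 0 < A := hA ▸ add_pos hP hQ
  have hPs1 : 0 < P * s - 1 := by linarith
  have hQs1 : 0 < Q * s - 1 := by linarith
  have hP' : (P ^ 2 + 1) * (s - Q) = A * (P * s - 1) := by
    rw [hA]; linear_combination (-(P + s)) * hPQ
  have hQ' : (Q ^ 2 + 1) * (s - P) = A * (Q * s - 1) := by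
    rw [hA]; linear_combination (-(Q + s)) * hPQ
  rw [div_mul_div_comm, div_mul_div_comm, one_mul, mul_left_comm _ (2 * s),
    mul_left_comm _ (2 * s), hP', hQ', div_add_div _ _ (by positivity) (by positivity),
    div_eq_div_iff (by positivity) (by positivity), hA]
  ring

theorem tfun_logDeriv_identity {A s : ℝ} (hA : 0 < A) (hs : 0 < s) (hξ : 0 < s ^ 2 - A ^ 2 + 1)
    (hD : 0 < s ^ 2 - A * s + 1) :
    1 / (2 * s * (s + A)) + (A ^ 2 - 1) / (A * (s ^ 2 - A ^ 2 + 1) * s) +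
        -(A * s - 2) / (2 * s * A * (s ^ 2 - A * s + 1)) =
      (3 * (s ^ 2 - A ^ 2 + 1) + 2 * (A ^ 2 - 1)) /
        (2 * (s ^ 2 - A ^ 2 + 1) * s * (A + (s ^ 2 - A ^ 2 + 1) * s)) := by
  have hE : A + (s ^ 2 - A ^ 2 + 1) * s = (s + A) * (s ^ 2 - A * s + 1) := by ring
  rw [hE, div_add_div _ _ (by positivity) (by positivity),
    div_add_div _ _ (by positivity) (by positivity), div_eq_div_iff (by positivity) (by positivity)]
  ring

theorem tfun_logDeriv_sum_eq {p q A B P Q s ξ : ℝ} (hP : 0 < P) (hQ : 0 < Q) (hPQ : P * Q = 1)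
    (hp : p = P ^ 2 + 1) (hq : q = Q ^ 2 + 1) (hA : A = P + Q) (hB : B ^ 2 = p + q - 1)
    (hs : 0 < s) (hξ : 0 < ξ) (hsξ : s ^ 2 = ξ + p + q - 1) :
    1 / (2 * s * (s + A)) + B / A * (B / (ξ * s)) + 1 / p * (-1 / (2 * s * (s - Q))) +
        1 / q * (-1 / (2 * s * (s - P))) =
      (3 * ξ + 2 * (p + q - 1)) / (2 * ξ * s * (A + ξ * s)) := by
  have hA0 : 0 < A := hA ▸ add_pos hP hQ
  have hpq : p + q - 1 = A ^ 2 - 1 := by rw [hp, hq, hA]; linear_combination (-2) * hPQ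
  have hB' : B / A * (B / (ξ * s)) = (A ^ 2 - 1) / (A * ξ * s) := by
    rw [div_mul_div_comm, ← sq, hB, hpq, mul_assoc]
  have hPs : 1 < P * s := by
    nlinarith [lt_of_pow_lt_pow_left₀ 2 hs.le (show Q ^ 2 < s ^ 2 by nlinarith)]
  have hQs : 1 < Q * s := by
    nlinarith [lt_of_pow_lt_pow_left₀ 2 hs.le (show P ^ 2 < s ^ 2 by nlinarith)]
  have hD : (P * s - 1) * (Q * s - 1) = s ^ 2 - A * s + 1 := by
    rw [hA]; linear_combination s ^ 2 * hPQ
  obtain rfl : ξ = s ^ 2 - A ^ 2 + 1 := by linarith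
  rw [hB', hpq, hp, hq, add_assoc _ (1 / (P ^ 2 + 1) * _),
    conjugate_terms_eq hP hQ hPQ hA hs hPs hQs, hD]
  exact tfun_logDeriv_identity hA0 hs hξ (hD ▸ mul_pos (by linarith) (by linarith))

theorem tfun_logderiv_general (p q : ℝ) (hq₁ : 1 < q)
    (hpq : 1 / p + 1 / q = 1) :
    ∀ ξ : ℝ, 0 < ξ →
      DifferentiableAt ℝ (tfun p q) ξ ∧ 0 < tfun p q ξ ∧
      deriv (tfun p q) ξ / tfun p q ξ =
        (3 * ξ + 2 * (p + q - 1)) /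
          (2 * ξ * Real.sqrt (ξ + p + q - 1) *
            (Real.sqrt (p + q) + ξ * Real.sqrt (ξ + p + q - 1))) := by
  intro ξ hξ
  have hconj : p.HolderConjugate q :=
    (holderConjugate_iff.2 ⟨hq₁, by simpa only [one_div, add_comm] using hpq⟩).symm
  have hp₁ : 1 ≤ p := hconj.lt.le
  have hL := hasLogDerivAt_tfun hp₁ hq₁.le hξ
  have hpos := tfun_pos hp₁ hq₁.le hξ
  refine ⟨hL.differentiableAt, hpos, ?_⟩
  rw [← logDeriv_apply, hL.logDeriv_eq hpos.ne']
  exact tfun_logDeriv_sum_eq (sqrt_pos.2 hconj.sub_one_pos) (sqrt_pos.2 hconj.symm.sub_one_pos)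
    hconj.sqrt_sub_one_mul_sqrt_sub_one (by rw [sq_sqrt hconj.sub_one_pos.le]; ring)
    (by rw [sq_sqrt hconj.symm.sub_one_pos.le]; ring) hconj.sqrt_add (sq_sqrt (by linarith))
    (sqrt_pos.2 (by linarith)) hξ (sq_sqrt (by linarith))

/-- `t` is differentiable and positive on `(0,∞)`, with logarithmic derivative
`t'/t = (3ξ + 2(p+q−1)) / (2ξ √(ξ+p+q−1) (√(p+q) + ξ√(ξ+p+q−1)))`. -/
theorem tfun_logderiv (p q : ℝ) (hp : 2 ≤ p) (hq₁ : 1 < q) (hq₂ : q ≤ 2)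
    (hpq : 1 / p + 1 / q = 1) :
    ∀ ξ : ℝ, 0 < ξ →
      DifferentiableAt ℝ (tfun p q) ξ ∧ 0 < tfun p q ξ ∧
      deriv (tfun p q) ξ / tfun p q ξ =
        (3 * ξ + 2 * (p + q - 1)) /
          (2 * ξ * Real.sqrt (ξ + p + q - 1) *
            (Real.sqrt (p + q) + ξ * Real.sqrt (ξ + p + q - 1))) :=
  tfun_logderiv_general p q hq₁ hpq
end
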